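/- Let (M; ∨, ∧, ⊕, ⊖, 0) be a wEMV-algebra and a ∈ M. Define on the interval [0,a] = {x ∈ M : x ≤ a} the operations x ⊕ₐ y = (x ⊕ y) ∧ a and λₐ(x) = a ⊖ x. Then ([0,a]; ⊕ₐ, λₐ, 0, a) is an MV-algebra, i.e., for all x, y ∈ [0,a]: ⊕ₐ is a commutative associative operation on [0,a] with neutral element 0, λₐ(λₐ(x)) = x, x ⊕ₐ a = a, and x ⊕ₐ λₐ(x ⊕ₐ λₐ(y)) = y ⊕ₐ λₐ(y ⊕ₐ λₐ(x)). Moreover, for all x, y ∈ [0,a], a ⊖ ((a ⊖ x) ⊕ₐ y) = x ⊖ y. -/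

import Mathlib

/-!
Truncating a summand by `a` is invisible after truncating the sum by `a`:
`((s ∧ a) ⊕ t) ∧ a = (s ⊕ t) ∧ a`, because `((s ⊕ t) ∧ a) ⊖ t ≤ s ∧ a` by (iii) and (viii).
This makes `⊕ₐ` associative. By (ix) and (vi), `a ⊖ ((a ⊖ x) ⊕ₐ y) = (x ∧ a) ⊖ y = x ⊖ y`, and with (iv) this
turns both sides of the Łukasiewicz axiom into `x ∨ y`.
-/

universe u

class WEMV (M : Type u) extends DistribLattice M, Zero M where
  oplus : M → M → M
  ominus : M → M → M
  zero_le : ∀ x : M, 0 ≤ x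
  oplus_comm : ∀ x y : M, oplus x y = oplus y x
  oplus_assoc : ∀ x y z : M, oplus (oplus x y) z = oplus x (oplus y z)
  oplus_zero : ∀ x : M, oplus x 0 = x
  ominus_oplus_le : ∀ x y : M, ominus (oplus x y) x ≤ y
  oplus_ominus : ∀ x y : M, oplus x (ominus y x) = x ⊔ y
  ominus_inf : ∀ x y : M, ominus x (x ⊓ y) = ominus x y
  ominus_ominus : ∀ x z : M, ominus z (ominus z x) = x ⊓ z
  ominus_sup : ∀ x y z : M, ominus z (x ⊔ y) = ominus z x ⊓ ominus z y
  inf_ominus : ∀ x y z : M, ominus (x ⊓ y) z = ominus x z ⊓ ominus y z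
  ominus_oplus_assoc : ∀ x y z : M, ominus x (oplus y z) = ominus (ominus x y) z
  oplus_sup : ∀ x y z : M, oplus x (y ⊔ z) = oplus x y ⊔ oplus x z

open WEMV

namespace WEMV

variable {M : Type u} [WEMV M]

theorem zero_oplus (x : M) : oplus 0 x = x := by
  rw [oplus_comm, oplus_zero]

theorem ominus_zero (x : M) : ominus x 0 = x := by
  have h := oplus_ominus (0 : M) x
  rwa [zero_oplus, sup_eq_right.mpr (WEMV.zero_le x)] at h

theorem oplus_le_oplus_left (x : M) {y z : M} (h : y ≤ z) : oplus x y ≤ oplus x z := by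
  rw [← sup_eq_right.mpr h, oplus_sup]
  exact le_sup_left

theorem le_oplus_self (x a : M) : a ≤ oplus x a :=
  calc a = oplus a 0 := (oplus_zero a).symm
    _ ≤ oplus a x := oplus_le_oplus_left a (WEMV.zero_le x)
    _ = oplus x a := oplus_comm a x

theorem ominus_le (x y : M) : ominus x y ≤ x :=
  calc ominus x y = ominus x (0 ⊔ y) := by rw [sup_eq_right.mpr (WEMV.zero_le y)]
    _ = x ⊓ ominus x y := by rw [ominus_sup, ominus_zero]
    _ ≤ x := inf_le_left

theorem ominus_self (x : M) : ominus x x = 0 := by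
  have h := ominus_oplus_le x (0 : M)
  rw [oplus_zero] at h
  exact le_antisymm h (WEMV.zero_le _)

theorem ominus_eq_zero_iff_le {x y : M} : ominus x y = 0 ↔ x ≤ y := by
  constructor
  · intro h
    have h' := oplus_ominus y x
    rw [h, oplus_zero] at h'
    exact le_sup_right.trans h'.ge
  · intro h
    rw [← ominus_inf, inf_eq_left.mpr h, ominus_self]

theorem ominus_inf_self (a u : M) : ominus a (u ⊓ a) = ominus a u := by
  rw [inf_comm, ominus_inf]

theorem inf_oplus_inf_eq (s t a : M) :
    oplus (s ⊓ a) t ⊓ a = oplus s t ⊓ a := by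
  apply le_antisymm
  · refine inf_le_inf_right a ?_
    rw [oplus_comm _ t, oplus_comm s t]
    exact oplus_le_oplus_left t inf_le_left
  · refine le_inf ?_ inf_le_right
    have hs : ominus (oplus s t) t ≤ s := by
      rw [oplus_comm]
      exact ominus_oplus_le t s
    rw [← ominus_eq_zero_iff_le, oplus_comm (s ⊓ a) t, ominus_oplus_assoc,
      ominus_eq_zero_iff_le, inf_ominus]
    exact inf_le_inf hs (ominus_le a t)

theorem ominus_oplus_ominus_inf {x a : M} (y : M) (hx : x ≤ a) :
    ominus a (oplus (ominus a x) y ⊓ a) = ominus x y := by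
  rw [ominus_inf_self, ominus_oplus_assoc, ominus_ominus, inf_eq_left.mpr hx]

theorem oplus_ominus_oplus_ominus_inf {x y a : M} (hx : x ≤ a) (hy : y ≤ a) :
    oplus x (ominus a (oplus x (ominus a y) ⊓ a)) ⊓ a = x ⊔ y := by
  rw [oplus_comm x (ominus a y), ominus_oplus_ominus_inf x hy, oplus_ominus,
    inf_eq_left.mpr (sup_le hx hy)]

end WEMV

theorem stmt7 {M : Type u} [WEMV M] (a : M) :
    ∀ x y z : M, x ≤ a → y ≤ a → z ≤ a →
      (oplus x y ⊓ a ≤ a) ∧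
      (ominus a x ≤ a) ∧
      (oplus x y ⊓ a = oplus y x ⊓ a) ∧
      (oplus (oplus x y ⊓ a) z ⊓ a = oplus x (oplus y z ⊓ a) ⊓ a) ∧
      (oplus x (0 : M) ⊓ a = x) ∧
      (ominus a (ominus a x) = x) ∧
      (oplus x a ⊓ a = a) ∧
      (oplus x (ominus a (oplus x (ominus a y) ⊓ a)) ⊓ a
        = oplus y (ominus a (oplus y (ominus a x) ⊓ a)) ⊓ a) ∧
      (ominus a (oplus (ominus a x) y ⊓ a) = ominus x y) := by
  intro x y z hx hy _
  refine ⟨inf_le_right, ominus_le a x, by rw [oplus_comm], ?_, ?_, ?_, ?_, ?_,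
    ominus_oplus_ominus_inf y hx⟩
  · rw [inf_oplus_inf_eq (oplus x y) z a, oplus_comm x (oplus y z ⊓ a),
      inf_oplus_inf_eq (oplus y z) x a, oplus_comm (oplus y z) x, oplus_assoc]
  · rw [oplus_zero, inf_eq_left.mpr hx]
  · rw [ominus_ominus, inf_eq_left.mpr hx]
  · exact inf_eq_right.mpr (le_oplus_self x a)
  · rw [oplus_ominus_oplus_ominus_inf hx hy, oplus_ominus_oplus_ominus_inf hy hx, sup_comm]
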